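/- arXiv:2312.17490 — 3 statements merged into one kernel-verified Lean document; each statement's English description precedes it below -/
import Mathlib

section
/- Let L > 0 and let g : [0,L] → ℝ be an absolutely continuous function with g(0) = g(L) = 0. Then the supremum norm of g satisfies ‖g‖_∞² ≤ (L/π) ∫₀ᴸ (g'(x))² dx. -/
/-!
By the fundamental theorem of calculus and Cauchy–Schwarz, `g x ² ≤ (x - a) ∫ₐˣ g'²` and
`g x ² ≤ (b - x) ∫ₓᵇ g'²`. Weighting these by `b - x` and `x - a` and using
`(x - a)(b - x) ≤ (b - a)² / 4` gives `g x ² ≤ (b - a) / 4 ∫ₐᵇ g'²`, which is stronger than the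
claim since `π < 4`.
-/

open MeasureTheory Real Set

theorem sq_intervalIntegral_le_mul_integral_sq_of_le {f : ℝ → ℝ} {a b : ℝ} (hab : a ≤ b)
    (hf : IntervalIntegrable f volume a b)
    (hf2 : IntervalIntegrable (fun x => f x ^ 2) volume a b) :
    (∫ x in a..b, f x) ^ 2 ≤ (b - a) * ∫ x in a..b, f x ^ 2 := by
  set I := ∫ x in a..b, f x
  set J := ∫ x in a..b, f x ^ 2
  -- `(b - a) f - I` is `(b - a)` times the deviation of `f` from its mean
  have hexpand : ∫ x in a..b, ((b - a) * f x - I) ^ 2 = (b - a) * ((b - a) * J - I ^ 2) := by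
    have h : ∀ x, ((b - a) * f x - I) ^ 2 =
        (b - a) ^ 2 * f x ^ 2 - 2 * (b - a) * I * f x + I ^ 2 := fun x => by ring
    simp_rw [h]
    rw [intervalIntegral.integral_add ((hf2.const_mul _).sub (hf.const_mul _))
        intervalIntegrable_const,
      intervalIntegral.integral_sub (hf2.const_mul _) (hf.const_mul _),
      intervalIntegral.integral_const_mul, intervalIntegral.integral_const_mul,
      intervalIntegral.integral_const, smul_eq_mul]
    ring
  have hnonneg : 0 ≤ (b - a) * ((b - a) * J - I ^ 2) :=
    hexpand ▸ intervalIntegral.integral_nonneg hab fun x _ => sq_nonneg _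
  rcases hab.eq_or_lt with rfl | hlt
  · simp [I]
  · linarith [nonneg_of_mul_nonneg_right hnonneg (sub_pos.2 hlt)]

theorem sq_intervalIntegral_le_mul_integral_sq {f : ℝ → ℝ} {a b : ℝ}
    (hf : IntervalIntegrable f volume a b)
    (hf2 : IntervalIntegrable (fun x => f x ^ 2) volume a b) :
    (∫ x in a..b, f x) ^ 2 ≤ (b - a) * ∫ x in a..b, f x ^ 2 := by
  rcases le_total a b with hab | hba
  · exact sq_intervalIntegral_le_mul_integral_sq_of_le hab hf hf2
  · have := sq_intervalIntegral_le_mul_integral_sq_of_le hba hf.symm hf2.symm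
    rw [intervalIntegral.integral_symm a, intervalIntegral.integral_symm a, neg_sq] at this
    linarith

theorem sq_sub_le_mul_integral_sq_deriv {g g' : ℝ → ℝ} {a b : ℝ} (hab : a ≤ b)
    (hderiv : ∀ t ∈ Icc a b, HasDerivWithinAt g (g' t) (Icc a b) t)
    (hint : IntervalIntegrable g' volume a b)
    (hint2 : IntervalIntegrable (fun t => g' t ^ 2) volume a b) :
    (g b - g a) ^ 2 ≤ (b - a) * ∫ t in a..b, g' t ^ 2 := by
  have hftc : ∫ t in a..b, g' t = g b - g a :=
    intervalIntegral.integral_eq_sub_of_hasDerivAt_of_le hab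
      (fun t ht => (hderiv t ht).continuousWithinAt)
      (fun t ht => (hderiv t (Ioo_subset_Icc_self ht)).hasDerivAt (Icc_mem_nhds ht.1 ht.2)) hint
  exact hftc ▸ sq_intervalIntegral_le_mul_integral_sq hint hint2

theorem sq_le_quarter_mul_add_of_sq_le_mul {a b x y A B : ℝ} (hx : x ∈ Icc a b)
    (hA : 0 ≤ A) (hB : 0 ≤ B) (hleft : y ^ 2 ≤ (x - a) * A) (hright : y ^ 2 ≤ (b - x) * B) :
    y ^ 2 ≤ (b - a) / 4 * (A + B) := by
  obtain ⟨hax, hxb⟩ := hx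
  have hweighted : (b - a) * y ^ 2 ≤ (x - a) * (b - x) * (A + B) := by
    nlinarith [mul_le_mul_of_nonneg_left hleft (sub_nonneg.2 hxb),
      mul_le_mul_of_nonneg_left hright (sub_nonneg.2 hax)]
  have hamgm : (x - a) * (b - x) ≤ (b - a) ^ 2 / 4 := by nlinarith [sq_nonneg (a + b - 2 * x)]
  rcases (hax.trans hxb).eq_or_lt with rfl | hab
  · nlinarith
  · nlinarith [mul_le_mul_of_nonneg_right hamgm (add_nonneg hA hB)]

theorem sq_le_quarter_mul_integral_sq_deriv {g g' : ℝ → ℝ} {a b : ℝ}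
    (hderiv : ∀ t ∈ Icc a b, HasDerivWithinAt g (g' t) (Icc a b) t)
    (hint : IntervalIntegrable g' volume a b)
    (hint2 : IntervalIntegrable (fun t => g' t ^ 2) volume a b)
    (ha : g a = 0) (hb : g b = 0) {x : ℝ} (hx : x ∈ Icc a b) :
    g x ^ 2 ≤ (b - a) / 4 * ∫ t in a..b, g' t ^ 2 := by
  have hsub_left : uIcc a x ⊆ uIcc a b := uIcc_subset_uIcc_left (Icc_subset_uIcc hx)
  have hsub_right : uIcc x b ⊆ uIcc a b := uIcc_subset_uIcc_right (Icc_subset_uIcc hx)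
  have hleft := sq_sub_le_mul_integral_sq_deriv hx.1
    (fun t ht => (hderiv t (Icc_subset_Icc_right hx.2 ht)).mono (Icc_subset_Icc_right hx.2))
    (hint.mono_set hsub_left) (hint2.mono_set hsub_left)
  have hright := sq_sub_le_mul_integral_sq_deriv hx.2
    (fun t ht => (hderiv t (Icc_subset_Icc_left hx.1 ht)).mono (Icc_subset_Icc_left hx.1))
    (hint.mono_set hsub_right) (hint2.mono_set hsub_right)
  rw [ha, sub_zero] at hleft
  rw [hb, zero_sub, neg_sq] at hright
  rw [← intervalIntegral.integral_add_adjacent_intervals (hint2.mono_set hsub_left)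
    (hint2.mono_set hsub_right)]
  exact sq_le_quarter_mul_add_of_sq_le_mul hx
    (intervalIntegral.integral_nonneg hx.1 fun t _ => sq_nonneg _)
    (intervalIntegral.integral_nonneg hx.2 fun t _ => sq_nonneg _) hleft hright

theorem psw_sup_dirichlet_general (L : ℝ) (g g' : ℝ → ℝ)
    (hderiv : ∀ x ∈ Icc (0:ℝ) L, HasDerivWithinAt g (g' x) (Icc (0:ℝ) L) x)
    (hint : IntervalIntegrable g' volume 0 L)
    (hint2 : IntervalIntegrable (fun x => (g' x) ^ 2) volume 0 L)
    (h0 : g 0 = 0) (hLend : g L = 0) :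
    ∀ x ∈ Icc (0:ℝ) L, (g x) ^ 2 ≤ L / Real.pi * ∫ x in (0:ℝ)..L, (g' x) ^ 2 := by
  intro x hx
  have hL : 0 ≤ L := hx.1.trans hx.2
  have hquarter := sq_le_quarter_mul_integral_sq_deriv hderiv hint hint2 h0 hLend hx
  rw [sub_zero] at hquarter
  refine hquarter.trans (mul_le_mul_of_nonneg_right ?_ ?_)
  · exact div_le_div_of_nonneg_left hL pi_pos pi_lt_four.le
  · exact intervalIntegral.integral_nonneg hL fun t _ => sq_nonneg _

/-- **Sup-norm Poincaré–Sobolev–Wirtinger inequality (Dirichlet version).**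
Let `L > 0` and let `g : [0,L] → ℝ` be absolutely continuous with `g 0 = g L = 0`
(`g` is modelled as having derivative `g'` on `[0,L]`, with `g'` and `g'²` integrable).
Then `‖g‖_∞² ≤ (L/π) ∫₀ᴸ g'²`, i.e. `g(x)² ≤ (L/π) ∫₀ᴸ g'²` for every `x ∈ [0,L]`. -/
theorem psw_sup_dirichlet (L : ℝ) (hL : 0 < L) (g g' : ℝ → ℝ)
    (hderiv : ∀ x ∈ Icc (0:ℝ) L, HasDerivWithinAt g (g' x) (Icc (0:ℝ) L) x)
    (hint : IntervalIntegrable g' volume 0 L)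
    (hint2 : IntervalIntegrable (fun x => (g' x) ^ 2) volume 0 L)
    (h0 : g 0 = 0) (hLend : g L = 0) :
    ∀ x ∈ Icc (0:ℝ) L, (g x) ^ 2 ≤ L / Real.pi * ∫ x in (0:ℝ)..L, (g' x) ^ 2 :=
  psw_sup_dirichlet_general L g g' hderiv hint hint2 h0 hLend
end

section
/- Let L > 0 and let g : [0,L] → ℝ be an absolutely continuous function with ∫₀ᴸ g(x) dx = 0. Then the supremum norm of g satisfies ‖g‖_∞² ≤ (2L/π) ∫₀ᴸ (g'(x))² dx. -/
open MeasureTheory Real Set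

/-- Cauchy–Schwarz for interval integrals: `(∫ f)² ≤ (b-a) ∫ f²`. -/
private lemma cs_interval (a b : ℝ) (hab : a ≤ b) (f : ℝ → ℝ)
    (hf : IntervalIntegrable f volume a b)
    (hf2 : IntervalIntegrable (fun x => f x ^ 2) volume a b) :
    (∫ x in a..b, f x) ^ 2 ≤ (b - a) * ∫ x in a..b, f x ^ 2 := by
  rcases eq_or_lt_of_le hab with rfl | hlt
  · simp
  have hba : 0 < b - a := by linarith
  set I := ∫ x in a..b, f x with hI
  set J := ∫ x in a..b, f x ^ 2 with hJ
  set c := I / (b - a) with hc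
  have h0 : 0 ≤ ∫ x in a..b, (f x - c) ^ 2 :=
    intervalIntegral.integral_nonneg hab (fun x _ => sq_nonneg _)
  have hexp : ∫ x in a..b, (f x - c) ^ 2 = J - 2 * c * I + (b - a) * c ^ 2 := by
    have heq : ∀ x, (f x - c) ^ 2 = (f x ^ 2 - (2 * c) * f x) + c ^ 2 := fun x => by ring
    simp_rw [heq]
    rw [intervalIntegral.integral_add (hf2.sub (hf.const_mul (2 * c)))
        intervalIntegrable_const,
      intervalIntegral.integral_sub hf2 (hf.const_mul (2 * c)),
      intervalIntegral.integral_const_mul, intervalIntegral.integral_const]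
    simp only [smul_eq_mul]
    try ring
  rw [hexp] at h0
  have hcI : c * (b - a) = I := div_mul_cancel₀ _ hba.ne'
  nlinarith [mul_nonneg hba.le h0, sq_nonneg (c * (b - a) - I)]

/-- **Sup-norm Poincaré–Sobolev–Wirtinger inequality (mean-zero version).**
Let `L > 0` and let `g : [0,L] → ℝ` be absolutely continuous with `∫₀ᴸ g = 0`
(`g` is modelled as having derivative `g'` on `[0,L]`, with `g'` and `g'²` integrable).
Then `‖g‖_∞² ≤ (2L/π) ∫₀ᴸ g'²`, i.e. `g(x)² ≤ (2L/π) ∫₀ᴸ g'²` for every `x ∈ [0,L]`. -/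
theorem psw_sup_mean_zero (L : ℝ) (hL : 0 < L) (g g' : ℝ → ℝ)
    (hderiv : ∀ x ∈ Icc (0:ℝ) L, HasDerivWithinAt g (g' x) (Icc (0:ℝ) L) x)
    (hint : IntervalIntegrable g' volume 0 L)
    (hint2 : IntervalIntegrable (fun x => (g' x) ^ 2) volume 0 L)
    (hmean : ∫ x in (0:ℝ)..L, g x = 0) :
    ∀ x ∈ Icc (0:ℝ) L, (g x) ^ 2 ≤ 2 * L / Real.pi * ∫ x in (0:ℝ)..L, (g' x) ^ 2 := by
  intro x hx
  set E := ∫ t in (0:ℝ)..L, (g' t) ^ 2 with hE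
  have hE0 : 0 ≤ E := intervalIntegral.integral_nonneg hL.le (fun t _ => sq_nonneg _)
  have hgc : ContinuousOn g (Icc (0:ℝ) L) := fun t ht => (hderiv t ht).continuousWithinAt
  have huIcc : uIcc (0:ℝ) L = Icc (0:ℝ) L := uIcc_of_le hL.le
  -- subinterval inclusion
  have hsubI : ∀ a b : ℝ, a ∈ Icc (0:ℝ) L → b ∈ Icc (0:ℝ) L →
      uIcc a b ⊆ uIcc (0:ℝ) L := by
    intro a b ha hb
    apply uIcc_subset_uIcc <;> rw [huIcc] <;> assumption
  -- FTC on subintervals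
  have ftc : ∀ a b : ℝ, a ∈ Icc (0:ℝ) L → b ∈ Icc (0:ℝ) L → a ≤ b →
      ∫ s in a..b, g' s = g b - g a := by
    intro a b ha hb hab
    have hsub : Icc a b ⊆ Icc (0:ℝ) L := Icc_subset_Icc ha.1 hb.2
    refine intervalIntegral.integral_eq_sub_of_hasDeriv_right_of_le hab
      (hgc.mono hsub) (fun y hy => ?_) (hint.mono_set ?_)
    · have hy' : y ∈ Ioo (0:ℝ) L :=
        ⟨lt_of_le_of_lt ha.1 hy.1, lt_of_lt_of_le hy.2 hb.2⟩
      exact (((hderiv y (Ioo_subset_Icc_self hy')).hasDerivAt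
        (Icc_mem_nhds hy'.1 hy'.2)).hasDerivWithinAt)
    · rw [huIcc, uIcc_of_le hab]; exact hsub
  have hmem0 : (0:ℝ) ∈ Icc (0:ℝ) L := ⟨le_refl 0, hL.le⟩
  set A := ∫ s in (0:ℝ)..x, g' s with hA
  set H : ℝ → ℝ := fun t => ∫ s in (0:ℝ)..t, g' s with hHdef
  set F : ℝ → ℝ := fun t => A - H t with hFdef
  have hgt : ∀ t ∈ Icc (0:ℝ) L, g x - g t = F t := by
    intro t ht
    have h1 : H t = g t - g 0 := ftc 0 t hmem0 ht ht.1
    have h2 : A = g x - g 0 := ftc 0 x hmem0 hx hx.1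
    simp only [hFdef, h1, h2]
    ring
  -- continuity / integrability of H and F
  have hHc : ContinuousOn H (Icc (0:ℝ) L) := by
    have := intervalIntegral.continuousOn_primitive_interval'
      (μ := volume) (f := g') (b₁ := (0:ℝ)) (b₂ := L) hint left_mem_uIcc
    rwa [huIcc] at this
  have hFc : ContinuousOn F (Icc (0:ℝ) L) := continuousOn_const.sub hHc
  have hFi : IntervalIntegrable F volume 0 L :=
    ContinuousOn.intervalIntegrable (by rwa [huIcc])
  have hF2i : IntervalIntegrable (fun t => F t ^ 2) volume 0 L :=
    ContinuousOn.intervalIntegrable (by rw [huIcc]; exact hFc.pow 2)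
  have hgi : IntervalIntegrable g volume 0 L :=
    ContinuousOn.intervalIntegrable (by rwa [huIcc])
  -- key identity : ∫ F = L * g x
  have key : ∫ t in (0:ℝ)..L, F t = L * g x := by
    have : ∫ t in (0:ℝ)..L, F t = ∫ t in (0:ℝ)..L, (g x - g t) := by
      refine intervalIntegral.integral_congr ?_
      intro t ht
      rw [huIcc] at ht
      exact (hgt t ht).symm
    rw [this, intervalIntegral.integral_sub intervalIntegrable_const hgi, hmean,
      intervalIntegral.integral_const]
    simp
  -- subinterval integrals of g'^2 are at most E
  have hEsub : ∀ a b : ℝ, a ∈ Icc (0:ℝ) L → b ∈ Icc (0:ℝ) L → a ≤ b →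
      ∫ s in a..b, (g' s) ^ 2 ≤ E := by
    intro a b ha hb hab
    have i1 : IntervalIntegrable (fun s => (g' s) ^ 2) volume 0 a :=
      hint2.mono_set (hsubI 0 a hmem0 ha)
    have i2 : IntervalIntegrable (fun s => (g' s) ^ 2) volume a b :=
      hint2.mono_set (hsubI a b ha hb)
    have i3 : IntervalIntegrable (fun s => (g' s) ^ 2) volume b L :=
      hint2.mono_set (hsubI b L hb (right_mem_Icc.2 hL.le))
    have e1 : (∫ s in (0:ℝ)..a, (g' s) ^ 2) + ∫ s in a..b, (g' s) ^ 2
        = ∫ s in (0:ℝ)..b, (g' s) ^ 2 :=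
      intervalIntegral.integral_add_adjacent_intervals i1 i2
    have e2 : (∫ s in (0:ℝ)..b, (g' s) ^ 2) + ∫ s in b..L, (g' s) ^ 2 = E :=
      intervalIntegral.integral_add_adjacent_intervals (i1.trans i2) i3
    have n1 : 0 ≤ ∫ s in (0:ℝ)..a, (g' s) ^ 2 :=
      intervalIntegral.integral_nonneg ha.1 (fun s _ => sq_nonneg _)
    have n3 : 0 ≤ ∫ s in b..L, (g' s) ^ 2 :=
      intervalIntegral.integral_nonneg hb.2 (fun s _ => sq_nonneg _)
    linarith
  -- pointwise bound F t ^ 2 ≤ |x - t| * E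
  have hpt : ∀ t ∈ Icc (0:ℝ) L, F t ^ 2 ≤ |x - t| * E := by
    intro t ht
    have hgx : IntervalIntegrable g' volume 0 x := hint.mono_set (hsubI 0 x hmem0 hx)
    have hgt' : IntervalIntegrable g' volume 0 t := hint.mono_set (hsubI 0 t hmem0 ht)
    have hFt : F t = ∫ s in t..x, g' s := by
      simp only [hFdef, hA, hHdef]
      exact intervalIntegral.integral_interval_sub_left hgx hgt'
    rcases le_total t x with htx | htx
    · have hcs : (∫ s in t..x, g' s) ^ 2 ≤ (x - t) * ∫ s in t..x, (g' s) ^ 2 :=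
        cs_interval t x htx g' (hint.mono_set (hsubI t x ht hx))
          (hint2.mono_set (hsubI t x ht hx))
      have hsub : ∫ s in t..x, (g' s) ^ 2 ≤ E := hEsub t x ht hx htx
      have habs : |x - t| = x - t := abs_of_nonneg (by linarith)
      rw [hFt, habs]
      nlinarith
    · have hcs : (∫ s in x..t, g' s) ^ 2 ≤ (t - x) * ∫ s in x..t, (g' s) ^ 2 :=
        cs_interval x t htx g' (hint.mono_set (hsubI x t hx ht))
          (hint2.mono_set (hsubI x t hx ht))
      have hsub : ∫ s in x..t, (g' s) ^ 2 ≤ E := hEsub x t hx ht htx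
      have habs : |x - t| = t - x := by rw [abs_sub_comm]; exact abs_of_nonneg (by linarith)
      have hsymm : (∫ s in t..x, g' s) ^ 2 = (∫ s in x..t, g' s) ^ 2 := by
        rw [intervalIntegral.integral_symm]; ring
      rw [hFt, hsymm, habs]
      nlinarith
  -- integrate the pointwise bound
  have habsi : IntervalIntegrable (fun t => |x - t| * E) volume 0 L :=
    (((continuous_const.sub continuous_id).abs.mul continuous_const)).intervalIntegrable 0 L
  have hmono : ∫ t in (0:ℝ)..L, F t ^ 2 ≤ ∫ t in (0:ℝ)..L, |x - t| * E := by
    refine intervalIntegral.integral_mono_on hL.le hF2i habsi ?_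
    exact hpt
  -- compute the right-hand side
  have habs_int : ∫ t in (0:ℝ)..L, |x - t| = x ^ 2 / 2 + (L - x) ^ 2 / 2 := by
    have i1 : IntervalIntegrable (fun t => |x - t|) volume 0 x :=
      ((continuous_const.sub continuous_id).abs).intervalIntegrable 0 x
    have i2 : IntervalIntegrable (fun t => |x - t|) volume x L :=
      ((continuous_const.sub continuous_id).abs).intervalIntegrable x L
    rw [← intervalIntegral.integral_add_adjacent_intervals i1 i2]
    have e1 : ∫ t in (0:ℝ)..x, |x - t| = ∫ t in (0:ℝ)..x, (x - t) := by
      refine intervalIntegral.integral_congr ?_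
      intro t ht
      rw [uIcc_of_le hx.1] at ht
      exact abs_of_nonneg (by linarith [ht.2])
    have e2 : ∫ t in x..L, |x - t| = ∫ t in x..L, (t - x) := by
      refine intervalIntegral.integral_congr ?_
      intro t ht
      rw [uIcc_of_le hx.2] at ht
      show |x - t| = t - x
      rw [abs_sub_comm]
      exact abs_of_nonneg (by linarith [ht.1])
    have p1 : ∫ t in (0:ℝ)..x, (x - t) = x ^ 2 / 2 := by
      rw [intervalIntegral.integral_comp_sub_left (fun s => s) x]
      rw [integral_id]
      ring
    have p2 : ∫ t in x..L, (t - x) = (L - x) ^ 2 / 2 := by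
      rw [intervalIntegral.integral_comp_sub_right (fun s => s) x]
      rw [integral_id]
      ring
    rw [e1, e2, p1, p2]
  have hrhs : ∫ t in (0:ℝ)..L, |x - t| * E = (x ^ 2 / 2 + (L - x) ^ 2 / 2) * E := by
    rw [intervalIntegral.integral_mul_const, habs_int]
  -- combine with Cauchy–Schwarz
  have hcs2 : (∫ t in (0:ℝ)..L, F t) ^ 2 ≤ L * ∫ t in (0:ℝ)..L, F t ^ 2 := by
    have := cs_interval 0 L hL.le F hFi hF2i
    simpa using this
  have hquad : x ^ 2 / 2 + (L - x) ^ 2 / 2 ≤ L ^ 2 / 2 := by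
    nlinarith [hx.1, hx.2]
  have hmain : (L * g x) ^ 2 ≤ L * (L ^ 2 / 2 * E) := by
    rw [← key]
    calc (∫ t in (0:ℝ)..L, F t) ^ 2 ≤ L * ∫ t in (0:ℝ)..L, F t ^ 2 := hcs2
      _ ≤ L * ((x ^ 2 / 2 + (L - x) ^ 2 / 2) * E) := by
          rw [← hrhs]; exact mul_le_mul_of_nonneg_left hmono hL.le
      _ ≤ L * (L ^ 2 / 2 * E) := by
          apply mul_le_mul_of_nonneg_left _ hL.le
          exact mul_le_mul_of_nonneg_right hquad hE0
  have hgx2 : g x ^ 2 ≤ L / 2 * E := by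
    have hL2 : 0 < L ^ 2 := by positivity
    nlinarith [hmain]
  have hpi : L / 2 ≤ 2 * L / Real.pi := by
    have hpi4 : Real.pi ≤ 4 := Real.pi_le_four
    have hpi0 : 0 < Real.pi := Real.pi_pos
    rw [div_le_div_iff₀ (by norm_num) hpi0]
    nlinarith
  calc g x ^ 2 ≤ L / 2 * E := hgx2
    _ ≤ 2 * L / Real.pi * E := mul_le_mul_of_nonneg_right hpi hE0
end

section
/- Suppose α solves the curve diffusion flow with generalised Neumann boundary conditions inside the cone on [0,T). Then for every ℓ ∈ ℕ and every t ∈ [0,T), all odd-order arclength derivatives of the curvature vanish at the endpoints: k_{s^{2ℓ−1}}(−1, t) = k_{s^{2ℓ−1}}(1, t) = 0. -/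
open MeasureTheory Real Set

noncomputable section

/-- The arclength derivative of a scalar quantity along the curve `γ`. -/
def aderiv (γ : ℝ → EuclideanSpace ℝ (Fin 2)) (f : ℝ → ℝ) : ℝ → ℝ :=
  fun u => ‖deriv γ u‖⁻¹ * deriv f u

/-- The arclength derivative of a vector quantity along the curve `γ`. -/
def aderivV (γ : ℝ → EuclideanSpace ℝ (Fin 2)) (f : ℝ → EuclideanSpace ℝ (Fin 2)) :
    ℝ → EuclideanSpace ℝ (Fin 2) :=
  fun u => ‖deriv γ u‖⁻¹ • deriv f u

/-- The unit tangent vector. -/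
def tangentVec (γ : ℝ → EuclideanSpace ℝ (Fin 2)) : ℝ → EuclideanSpace ℝ (Fin 2) :=
  fun u => ‖deriv γ u‖⁻¹ • deriv γ u

/-- The (outward) unit normal: the clockwise rotation of the unit tangent. -/
def normalVec (γ : ℝ → EuclideanSpace ℝ (Fin 2)) : ℝ → EuclideanSpace ℝ (Fin 2) :=
  fun u => (WithLp.equiv 2 (Fin 2 → ℝ)).symm ![tangentVec γ u 1, -(tangentVec γ u 0)]

/-- The scalar curvature `k = -⟨α_ss, ν⟩`. -/
def curvature (γ : ℝ → EuclideanSpace ℝ (Fin 2)) : ℝ → ℝ :=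
  fun u => -(inner ℝ (aderivV γ (aderivV γ γ) u) (normalVec γ u) : ℝ)

/-- The `n`-th arclength derivative of the curvature, `k_{s^n}`. -/
def curvDeriv (γ : ℝ → EuclideanSpace ℝ (Fin 2)) (n : ℕ) : ℝ → ℝ :=
  (aderiv γ)^[n] (curvature γ)

/-- `∫ f ds` along the curve. -/
def arcCurveIntegral (γ : ℝ → EuclideanSpace ℝ (Fin 2)) (f : ℝ → ℝ) : ℝ :=
  ∫ u in (-1:ℝ)..1, f u * ‖deriv γ u‖

/-- The length `L = ∫ ds`. -/
def clength (γ : ℝ → EuclideanSpace ℝ (Fin 2)) : ℝ :=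
  ∫ u in (-1:ℝ)..1, ‖deriv γ u‖

/-- The average curvature `k̄ = L⁻¹ ∫ k ds`. -/
def avgCurv (γ : ℝ → EuclideanSpace ℝ (Fin 2)) : ℝ :=
  (clength γ)⁻¹ * arcCurveIntegral γ (curvature γ)

/-- The oscillation of curvature `K_osc = L ∫ (k - k̄)² ds`. -/
def Kosc (γ : ℝ → EuclideanSpace ℝ (Fin 2)) : ℝ :=
  clength γ * arcCurveIntegral γ (fun u => (curvature γ u - avgCurv γ) ^ 2)

/-- The area enclosed by the curve and the cone, `A = ½ ∫ ⟨α, ν⟩ ds`. -/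
def enclosedArea (γ : ℝ → EuclideanSpace ℝ (Fin 2)) : ℝ :=
  (1 / 2) * arcCurveIntegral γ (fun u => (inner ℝ (γ u) (normalVec γ u) : ℝ))

/-- The unit vector in direction `θ`. -/
def coneDir (θ : ℝ) : EuclideanSpace ℝ (Fin 2) :=
  (WithLp.equiv 2 (Fin 2 → ℝ)).symm ![Real.cos θ, Real.sin θ]

/-- `α` solves the curve diffusion flow `∂α/∂t = k_ss ν` with generalised Neumann
boundary conditions inside the cone with angles `θ₂ < θ₁`, for times `t ∈ J`. -/
structure IsCDFlow (θ₁ θ₂ : ℝ) (J : Set ℝ) (α : ℝ → ℝ → EuclideanSpace ℝ (Fin 2)) : Prop where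
  angle_nonneg : 0 ≤ θ₂
  angle_lt : θ₂ < θ₁
  angle_pi : θ₁ < Real.pi
  smooth : ContDiff ℝ (⊤ : ℕ∞) (fun p : ℝ × ℝ => α p.1 p.2)
  regular : ∀ t ∈ J, ∀ u ∈ Icc (-1:ℝ) 1, deriv (fun u => α u t) u ≠ 0
  flow : ∀ t ∈ J, ∀ u ∈ Icc (-1:ℝ) 1,
    HasDerivAt (fun t => α u t)
      (curvDeriv (fun u => α u t) 2 u • normalVec (fun u => α u t) u) t
  bdry_left : ∀ t ∈ J, ∃ ρ : ℝ, 0 < ρ ∧ α (-1) t = ρ • coneDir θ₁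
  bdry_right : ∀ t ∈ J, ∃ ρ : ℝ, 0 < ρ ∧ α 1 t = ρ • coneDir θ₂
  interior_cone : ∀ t ∈ J, ∀ u ∈ Ioo (-1:ℝ) 1,
    ∃ ρ θ : ℝ, 0 < ρ ∧ θ₂ < θ ∧ θ < θ₁ ∧ α u t = ρ • coneDir θ
  neumann_left : ∀ t ∈ J,
    (inner ℝ (normalVec (fun u => α u t) (-1)) (coneDir (θ₁ + Real.pi / 2)) : ℝ) = 0
  neumann_right : ∀ t ∈ J,
    (inner ℝ (normalVec (fun u => α u t) 1) (coneDir (θ₂ + Real.pi / 2)) : ℝ) = 0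
  noflux : ∀ t ∈ J,
    curvDeriv (fun u => α u t) 1 (-1) = 0 ∧ curvDeriv (fun u => α u t) 1 1 = 0

open Set Function Filter
open scoped ContDiff Topology


variable {F : Type*} [NormedAddCommGroup F] [NormedSpace ℝ F]

def pd1 (f : ℝ × ℝ → F) : ℝ × ℝ → F := fun p => deriv (fun u => f (u, p.2)) p.1
def pd2 (f : ℝ × ℝ → F) : ℝ × ℝ → F := fun p => deriv (fun t => f (p.1, t)) p.2

theorem hasDerivAt_slice1 {f : ℝ × ℝ → F} {L : ℝ × ℝ →L[ℝ] F} {p : ℝ × ℝ}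
    (hf : HasFDerivAt f L p) : HasDerivAt (fun u => f (u, p.2)) (L (1, 0)) p.1 := by
  have h : HasDerivAt (fun u : ℝ => ((u, p.2) : ℝ × ℝ)) (1, 0) p.1 :=
    (hasDerivAt_id p.1).prodMk (hasDerivAt_const _ _)
  exact (hf.comp_hasDerivAt p.1 h)

theorem hasDerivAt_slice2 {f : ℝ × ℝ → F} {L : ℝ × ℝ →L[ℝ] F} {p : ℝ × ℝ}
    (hf : HasFDerivAt f L p) : HasDerivAt (fun t => f (p.1, t)) (L (0, 1)) p.2 := by
  have h : HasDerivAt (fun t : ℝ => ((p.1, t) : ℝ × ℝ)) (0, 1) p.2 :=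
    (hasDerivAt_const _ _).prodMk (hasDerivAt_id p.2)
  exact (hf.comp_hasDerivAt p.2 h)

theorem pd1_eq_fderiv {f : ℝ × ℝ → F} {p : ℝ × ℝ} (hf : DifferentiableAt ℝ f p) :
    pd1 f p = fderiv ℝ f p (1, 0) := (hasDerivAt_slice1 hf.hasFDerivAt).deriv

theorem pd2_eq_fderiv {f : ℝ × ℝ → F} {p : ℝ × ℝ} (hf : DifferentiableAt ℝ f p) :
    pd2 f p = fderiv ℝ f p (0, 1) := (hasDerivAt_slice2 hf.hasFDerivAt).deriv

theorem infty_add_one : (∞ + 1 : WithTop ℕ∞) = ∞ := by norm_num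

theorem one_le_infty : (∞ : WithTop ℕ∞) ≠ 0 := by simp

theorem hasDerivAt_pd1 {f : ℝ × ℝ → F} {p : ℝ × ℝ} (hf : DifferentiableAt ℝ f p) :
    HasDerivAt (fun u => f (u, p.2)) (pd1 f p) p.1 := by
  rw [pd1_eq_fderiv hf]; exact hasDerivAt_slice1 hf.hasFDerivAt

theorem hasDerivAt_pd2 {f : ℝ × ℝ → F} {p : ℝ × ℝ} (hf : DifferentiableAt ℝ f p) :
    HasDerivAt (fun t => f (p.1, t)) (pd2 f p) p.2 := by
  rw [pd2_eq_fderiv hf]; exact hasDerivAt_slice2 hf.hasFDerivAt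

theorem pd1_congr {f g : ℝ × ℝ → F} {p : ℝ × ℝ}
    (h : (fun u => f (u, p.2)) =ᶠ[𝓝 p.1] fun u => g (u, p.2)) : pd1 f p = pd1 g p :=
  h.deriv_eq

theorem pd2_congr {f g : ℝ × ℝ → F} {p : ℝ × ℝ}
    (h : (fun t => f (p.1, t)) =ᶠ[𝓝 p.2] fun t => g (p.1, t)) : pd2 f p = pd2 g p :=
  h.deriv_eq

theorem eventuallyEq_of_open {f g : ℝ × ℝ → F} {U : Set (ℝ × ℝ)} (hU : IsOpen U)
    {p : ℝ × ℝ} (hp : p ∈ U) (h : ∀ q ∈ U, f q = g q) : f =ᶠ[𝓝 p] g :=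
  Filter.eventually_of_mem (hU.mem_nhds hp) h

/-- slice eventual equality in the `u` direction from equality on an open set. -/
theorem slice1_eventuallyEq {f g : ℝ × ℝ → F} {U : Set (ℝ × ℝ)} (hU : IsOpen U)
    {p : ℝ × ℝ} (hp : p ∈ U) (h : ∀ q ∈ U, f q = g q) :
    (fun u => f (u, p.2)) =ᶠ[𝓝 p.1] fun u => g (u, p.2) := by
  have hc : Continuous fun u : ℝ => ((u, p.2) : ℝ × ℝ) := by fun_prop
  have : ∀ᶠ u in 𝓝 p.1, (u, p.2) ∈ U :=
    hc.continuousAt.preimage_mem_nhds (hU.mem_nhds (by simpa using hp))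
  filter_upwards [this] with u hu using h _ hu

theorem slice2_eventuallyEq {f g : ℝ × ℝ → F} {U : Set (ℝ × ℝ)} (hU : IsOpen U)
    {p : ℝ × ℝ} (hp : p ∈ U) (h : ∀ q ∈ U, f q = g q) :
    (fun t => f (p.1, t)) =ᶠ[𝓝 p.2] fun t => g (p.1, t) := by
  have hc : Continuous fun t : ℝ => ((p.1, t) : ℝ × ℝ) := by fun_prop
  have : ∀ᶠ t in 𝓝 p.2, (p.1, t) ∈ U :=
    hc.continuousAt.preimage_mem_nhds (hU.mem_nhds (by simpa using hp))
  filter_upwards [this] with t ht using h _ ht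

theorem contDiffAt_pd1 {f : ℝ × ℝ → F} {U : Set (ℝ × ℝ)} (hU : IsOpen U)
    (hf : ∀ q ∈ U, ContDiffAt ℝ ∞ f q) {p : ℝ × ℝ} (hp : p ∈ U) :
    ContDiffAt ℝ ∞ (pd1 f) p := by
  have h1 : ContDiffAt ℝ ∞ (fderiv ℝ f) p :=
    (hf p hp).fderiv_right (le_of_eq infty_add_one)
  have h2 : ContDiffAt ℝ ∞ (fun q => fderiv ℝ f q ((1:ℝ), (0:ℝ))) p :=
    h1.clm_apply contDiffAt_const
  refine h2.congr_of_eventuallyEq ?_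
  refine eventuallyEq_of_open hU hp fun q hq => ?_
  exact pd1_eq_fderiv ((hf q hq).differentiableAt one_le_infty)

theorem contDiffAt_pd2 {f : ℝ × ℝ → F} {U : Set (ℝ × ℝ)} (hU : IsOpen U)
    (hf : ∀ q ∈ U, ContDiffAt ℝ ∞ f q) {p : ℝ × ℝ} (hp : p ∈ U) :
    ContDiffAt ℝ ∞ (pd2 f) p := by
  have h1 : ContDiffAt ℝ ∞ (fderiv ℝ f) p :=
    (hf p hp).fderiv_right (le_of_eq infty_add_one)
  have h2 : ContDiffAt ℝ ∞ (fun q => fderiv ℝ f q ((0:ℝ), (1:ℝ))) p :=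
    h1.clm_apply contDiffAt_const
  refine h2.congr_of_eventuallyEq ?_
  refine eventuallyEq_of_open hU hp fun q hq => ?_
  exact pd2_eq_fderiv ((hf q hq).differentiableAt one_le_infty)

/-- Clairaut's theorem on an open set of `C^∞` points. -/
theorem clairaut {f : ℝ × ℝ → F} {U : Set (ℝ × ℝ)} (hU : IsOpen U)
    (hf : ∀ q ∈ U, ContDiffAt ℝ ∞ f q) {p : ℝ × ℝ} (hp : p ∈ U) :
    pd2 (pd1 f) p = pd1 (pd2 f) p := by
  have hdf : ContDiffAt ℝ ∞ (fderiv ℝ f) p :=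
    (hf p hp).fderiv_right (le_of_eq infty_add_one)
  set f'' := fderiv ℝ (fderiv ℝ f) p with hf''
  have hsnd : HasFDerivAt (fderiv ℝ f) f'' p := (hdf.differentiableAt one_le_infty).hasFDerivAt
  have hev : ∀ᶠ q in 𝓝 p, HasFDerivAt f (fderiv ℝ f q) q := by
    filter_upwards [hU.mem_nhds hp] with q hq
    exact ((hf q hq).differentiableAt one_le_infty).hasFDerivAt
  have hsym := second_derivative_symmetric_of_eventually hev hsnd
      ((1:ℝ), (0:ℝ)) ((0:ℝ), (1:ℝ))
  have e1 : pd2 (pd1 f) p = f'' ((0:ℝ),(1:ℝ)) ((1:ℝ),(0:ℝ)) := by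
    have hcong : (fun t => pd1 f (p.1, t)) =ᶠ[𝓝 p.2]
        fun t => fderiv ℝ f (p.1, t) ((1:ℝ),(0:ℝ)) :=
      slice2_eventuallyEq hU hp (fun q hq => pd1_eq_fderiv ((hf q hq).differentiableAt one_le_infty))
    have hd : HasDerivAt (fun t => fderiv ℝ f (p.1, t)) (f'' ((0:ℝ),(1:ℝ))) p.2 :=
      hasDerivAt_slice2 hsnd
    have hd2 : HasDerivAt (fun t => fderiv ℝ f (p.1, t) ((1:ℝ),(0:ℝ)))
        (f'' ((0:ℝ),(1:ℝ)) ((1:ℝ),(0:ℝ))) p.2 := by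
      simpa using hd.clm_apply (hasDerivAt_const _ ((1:ℝ),(0:ℝ)))
    have := hcong.deriv_eq
    rw [hd2.deriv] at this
    exact this
  have e2 : pd1 (pd2 f) p = f'' ((1:ℝ),(0:ℝ)) ((0:ℝ),(1:ℝ)) := by
    have hcong : (fun u => pd2 f (u, p.2)) =ᶠ[𝓝 p.1]
        fun u => fderiv ℝ f (u, p.2) ((0:ℝ),(1:ℝ)) :=
      slice1_eventuallyEq hU hp (fun q hq => pd2_eq_fderiv ((hf q hq).differentiableAt one_le_infty))
    have hd : HasDerivAt (fun u => fderiv ℝ f (u, p.2)) (f'' ((1:ℝ),(0:ℝ))) p.1 :=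
      hasDerivAt_slice1 hsnd
    have hd2 : HasDerivAt (fun u => fderiv ℝ f (u, p.2) ((0:ℝ),(1:ℝ)))
        (f'' ((1:ℝ),(0:ℝ)) ((0:ℝ),(1:ℝ))) p.1 := by
      simpa using hd.clm_apply (hasDerivAt_const _ ((0:ℝ),(1:ℝ)))
    have := hcong.deriv_eq
    rw [hd2.deriv] at this
    exact this
  rw [e1, e2, hsym]


set_option linter.unusedSectionVars false
open scoped ContDiff RealInnerProductSpace


abbrev E2 := EuclideanSpace ℝ (Fin 2)

def Jmap : E2 →L[ℝ] E2 :=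
  LinearMap.toContinuousLinearMap
  { toFun := fun x => (WithLp.equiv 2 (Fin 2 → ℝ)).symm ![x 1, -(x 0)]
    map_add' := by
      intro x y
      apply PiLp.ext
      intro i
      fin_cases i <;>
        simp [Matrix.cons_val_zero, Matrix.cons_val_one] <;> ring
    map_smul' := by
      intro c x
      apply PiLp.ext
      intro i
      fin_cases i <;>
        simp [PiLp.smul_apply, smul_eq_mul] <;> ring }

@[simp] theorem Jmap_apply (x : E2) :
    Jmap x = (WithLp.equiv 2 (Fin 2 → ℝ)).symm ![x 1, -(x 0)] := rfl

@[simp] theorem Jmap_apply0 (x : E2) : Jmap x 0 = x 1 := rfl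

@[simp] theorem Jmap_apply1 (x : E2) : Jmap x 1 = -(x 0) := rfl

theorem inner_E2 (x y : E2) : ⟪x, y⟫ = x 0 * y 0 + x 1 * y 1 := by
  simp [PiLp.inner_apply, Fin.sum_univ_two]
  ring

theorem JJ (x : E2) : Jmap (Jmap x) = -x := by
  apply PiLp.ext; intro i; fin_cases i
  · show Jmap (Jmap x) 0 = (-x) 0
    simp
  · show Jmap (Jmap x) 1 = (-x) 1
    simp

theorem expansion (T : E2) (hT : ⟪T, T⟫ = 1) (x : E2) :
    x = ⟪x, T⟫ • T + ⟪x, Jmap T⟫ • (Jmap T) := by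
  rw [inner_E2] at hT
  apply PiLp.ext; intro i
  fin_cases i
  · show x 0 = (⟪x, T⟫ • T + ⟪x, Jmap T⟫ • (Jmap T)) 0
    simp only [inner_E2, PiLp.add_apply, PiLp.smul_apply, smul_eq_mul, Jmap_apply0, Jmap_apply1]
    linear_combination (-(x 0)) * hT
  · show x 1 = (⟪x, T⟫ • T + ⟪x, Jmap T⟫ • (Jmap T)) 1
    simp only [inner_E2, PiLp.add_apply, PiLp.smul_apply, smul_eq_mul, Jmap_apply0, Jmap_apply1]
    linear_combination (-(x 1)) * hT

example (f : ℝ → E2) (x : ℝ) (v : E2) (hf : HasDerivAt f v x) :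
    HasDerivAt (fun u => Jmap (f u)) (Jmap v) x :=
  (Jmap.hasFDerivAt.comp_hasDerivAt x hf)

example (f : ℝ × ℝ → E2) (p : ℝ × ℝ) (hf : ContDiffAt ℝ ∞ f p) (h0 : f p ≠ 0) :
    ContDiffAt ℝ ∞ (fun q => ‖f q‖⁻¹) p := (hf.norm ℝ h0).inv (by simp [h0])

example (f g : ℝ × ℝ → E2) (p : ℝ × ℝ) (hf : ContDiffAt ℝ ∞ f p) (hg : ContDiffAt ℝ ∞ g p) :
    ContDiffAt ℝ ∞ (fun q => (⟪f q, g q⟫ : ℝ)) p := hf.inner ℝ hg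

example (f g : ℝ → E2) (x : ℝ) (v w : E2) (hf : HasDerivAt f v x) (hg : HasDerivAt g w x) :
    HasDerivAt (fun u => (⟪f u, g u⟫ : ℝ)) (⟪f x, w⟫ + ⟪v, g x⟫) x := hf.inner ℝ hg

example (f : ℝ → ℝ) (g : ℝ → E2) (x : ℝ) (v : ℝ) (w : E2)
    (hf : HasDerivAt f v x) (hg : HasDerivAt g w x) :
    HasDerivAt (fun u => f u • g u) (f x • w + v • g x) x := hf.smul hg

example (c : ℝ) (hc : c ≠ 0) : HasDerivAt (fun x : ℝ => Real.sqrt x) (1 / (2 * Real.sqrt c)) c :=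
  (Real.hasDerivAt_sqrt hc)

example (x : E2) : ⟪x, x⟫ = ‖x‖ ^ 2 := real_inner_self_eq_norm_sq x

theorem inner_J_self (x : E2) : ⟪Jmap x, x⟫ = 0 := by
  rw [inner_E2]; simp; ring
theorem inner_self_J (x : E2) : ⟪x, Jmap x⟫ = 0 := by
  rw [inner_E2]; simp; ring
theorem inner_J_J (x y : E2) : ⟪Jmap x, Jmap y⟫ = ⟪x, y⟫ := by
  rw [inner_E2, inner_E2]; simp; ring
open scoped RealInnerProductSpace
namespace CDFAux
open Set Function Filter
open scoped ContDiff Topology RealInnerProductSpace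



/-- joint spatial derivative of the flow -/
def Du (α : ℝ → ℝ → E2) : ℝ × ℝ → E2 := fun p => deriv (fun u => α u p.2) p.1
def Wj (α : ℝ → ℝ → E2) : ℝ × ℝ → ℝ := fun p => ‖Du α p‖⁻¹
def Lj (α : ℝ → ℝ → E2) : ℝ × ℝ → ℝ := fun p => ‖Du α p‖
def Tj (α : ℝ → ℝ → E2) : ℝ × ℝ → E2 := fun p => Wj α p • Du α p
def Nj (α : ℝ → ℝ → E2) : ℝ × ℝ → E2 := fun p => Jmap (Tj α p)
def Kj (α : ℝ → ℝ → E2) (m : ℕ) : ℝ × ℝ → ℝ := fun p => curvDeriv (fun u => α u p.2) m p.1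
def Sv (α : ℝ → ℝ → E2) : ℝ × ℝ → E2 := fun p => Wj α p • pd1 (Tj α) p
def UU (α : ℝ → ℝ → E2) : Set (ℝ × ℝ) := {p | Du α p ≠ 0}

variable {α : ℝ → ℝ → E2}

theorem Kj_succ (m : ℕ) (p : ℝ × ℝ) : Kj α (m + 1) p = Wj α p * pd1 (Kj α m) p := by
  show curvDeriv (fun u => α u p.2) (m+1) p.1 = _
  rw [curvDeriv, Function.iterate_succ_apply']
  rfl

theorem Kj_zero (p : ℝ × ℝ) : Kj α 0 p = -⟪Sv α p, Nj α p⟫ := rfl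

theorem Kj_curvDeriv (m : ℕ) (u t : ℝ) : curvDeriv (fun u => α u t) m u = Kj α m (u, t) := rfl

theorem normalVec_eq (u t : ℝ) : normalVec (fun u => α u t) u = Nj α (u, t) := rfl

end CDFAux
namespace CDFAux
open Set Function Filter
open scoped ContDiff Topology RealInnerProductSpace

section slice
variable {F : Type*} [NormedAddCommGroup F] [NormedSpace ℝ F]

theorem sliceD1 {f : ℝ × ℝ → F} {p : ℝ × ℝ} (hf : ContDiffAt ℝ ∞ f p) :
    HasDerivAt (fun u => f (u, p.2)) (pd1 f p) p.1 :=
  hasDerivAt_pd1 (hf.differentiableAt one_le_infty)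

theorem sliceD2 {f : ℝ × ℝ → F} {p : ℝ × ℝ} (hf : ContDiffAt ℝ ∞ f p) :
    HasDerivAt (fun t => f (p.1, t)) (pd2 f p) p.2 :=
  hasDerivAt_pd2 (hf.differentiableAt one_le_infty)
end slice

structure Ctx (Tend : ℝ) (α : ℝ → ℝ → EuclideanSpace ℝ (Fin 2)) : Prop where
  smooth : ContDiff ℝ ∞ (fun p : ℝ × ℝ => α p.1 p.2)
  reg : ∀ p : ℝ × ℝ, p.1 ∈ Icc (-1:ℝ) 1 → p.2 ∈ Ico (0:ℝ) Tend → Du α p ≠ 0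
  flow : ∀ p : ℝ × ℝ, p.1 ∈ Icc (-1:ℝ) 1 → p.2 ∈ Ico (0:ℝ) Tend →
    HasDerivAt (fun t => α p.1 t) (Kj α 2 p • Nj α p) p.2

variable {Tend : ℝ} {α : ℝ → ℝ → E2} (hc : Ctx Tend α)
include hc

theorem Du_smooth (p : ℝ × ℝ) : ContDiffAt ℝ ∞ (Du α) p := by
  have h : Du α = fun q => fderiv ℝ (fun p : ℝ × ℝ => α p.1 p.2) q ((1:ℝ), (0:ℝ)) := by
    funext q
    exact pd1_eq_fderiv ((hc.smooth.differentiable one_le_infty) q)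
  rw [h]
  exact ((hc.smooth.fderiv_right (le_of_eq infty_add_one)).clm_apply contDiff_const).contDiffAt

theorem UU_open : IsOpen (UU α) := by
  have hcont : Continuous (Du α) :=
    continuous_iff_continuousAt.2 fun p => (Du_smooth hc p).continuousAt
  have : UU α = (Du α) ⁻¹' ({0}ᶜ) := rfl
  rw [this]
  exact hcont.isOpen_preimage _ isOpen_compl_singleton

variable {p : ℝ × ℝ}

omit hc in
theorem Du_ne (hp : p ∈ UU α) : Du α p ≠ 0 := hp
omit hc in
theorem Lj_ne (hp : p ∈ UU α) : Lj α p ≠ 0 := norm_ne_zero_iff.2 hp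
omit hc in
theorem Wj_ne (hp : p ∈ UU α) : Wj α p ≠ 0 := inv_ne_zero (Lj_ne hp)
omit hc in
theorem LW (hp : p ∈ UU α) : Lj α p * Wj α p = 1 := mul_inv_cancel₀ (Lj_ne hp)
omit hc in
theorem WL (hp : p ∈ UU α) : Wj α p * Lj α p = 1 := inv_mul_cancel₀ (Lj_ne hp)

theorem Wj_smooth (hp : p ∈ UU α) : ContDiffAt ℝ ∞ (Wj α) p :=
  (((Du_smooth hc p).norm ℝ hp).inv (norm_ne_zero_iff.2 hp))

theorem Lj_smooth (hp : p ∈ UU α) : ContDiffAt ℝ ∞ (Lj α) p :=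
  (Du_smooth hc p).norm ℝ hp

theorem Tj_smooth (hp : p ∈ UU α) : ContDiffAt ℝ ∞ (Tj α) p :=
  (Wj_smooth hc hp).smul (Du_smooth hc p)

theorem Nj_smooth (hp : p ∈ UU α) : ContDiffAt ℝ ∞ (Nj α) p :=
  (Jmap.contDiff.contDiffAt).comp p (Tj_smooth hc hp)

theorem Sv_smooth (hp : p ∈ UU α) : ContDiffAt ℝ ∞ (Sv α) p :=
  (Wj_smooth hc hp).smul
    (contDiffAt_pd1 (UU_open hc) (fun _ hq => Tj_smooth hc hq) hp)

theorem Kj_smooth : ∀ (m : ℕ), ∀ {p : ℝ × ℝ}, p ∈ UU α → ContDiffAt ℝ ∞ (Kj α m) p := by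
  intro m
  induction m with
  | zero =>
    intro p hp
    have h : Kj α 0 = fun q => -⟪Sv α q, Nj α q⟫ := funext fun q => Kj_zero q
    rw [h]
    exact ((Sv_smooth hc hp).inner ℝ (Nj_smooth hc hp)).neg
  | succ m ih =>
    intro p hp
    have h : Kj α (m+1) = fun q => Wj α q * pd1 (Kj α m) q := funext fun q => Kj_succ m q
    rw [h]
    exact (Wj_smooth hc hp).mul
      (contDiffAt_pd1 (UU_open hc) (fun _ hq => ih hq) hp)

omit hc in
theorem Du_eq_LT (hp : p ∈ UU α) : Du α p = Lj α p • Tj α p := by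
  rw [Tj, smul_smul, LW hp, one_smul]

omit hc in
theorem TT_one (hp : p ∈ UU α) : ⟪Tj α p, Tj α p⟫ = 1 := by
  have : ⟪Tj α p, Tj α p⟫ = ‖Tj α p‖ ^ 2 := real_inner_self_eq_norm_sq _
  rw [this, Tj, norm_smul]
  rw [Wj, Real.norm_eq_abs, abs_of_nonneg (inv_nonneg.2 (norm_nonneg _))]
  rw [inv_mul_cancel₀ (norm_ne_zero_iff.2 hp)]
  norm_num

omit hc in
theorem TN_zero (hp : p ∈ UU α) : ⟪Tj α p, Nj α p⟫ = 0 := inner_self_J _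
omit hc in
theorem NT_zero (hp : p ∈ UU α) : ⟪Nj α p, Tj α p⟫ = 0 := inner_J_self _
omit hc in
theorem NN_one (hp : p ∈ UU α) : ⟪Nj α p, Nj α p⟫ = 1 := by
  rw [Nj, inner_J_J]; exact TT_one hp

theorem pd1T_T_zero (hp : p ∈ UU α) : ⟪pd1 (Tj α) p, Tj α p⟫ = 0 := by
  have hd : HasDerivAt (fun u => (⟪Tj α (u, p.2), Tj α (u, p.2)⟫ : ℝ))
      (⟪Tj α p, pd1 (Tj α) p⟫ + ⟪pd1 (Tj α) p, Tj α p⟫) p.1 :=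
    (sliceD1 (Tj_smooth hc hp)).inner ℝ (sliceD1 (Tj_smooth hc hp))
  have hev : (fun u => (⟪Tj α (u, p.2), Tj α (u, p.2)⟫ : ℝ)) =ᶠ[𝓝 p.1]
      fun _ => (1:ℝ) :=
    slice1_eventuallyEq (UU_open hc) hp fun q hq => TT_one hq
  have h0 : ⟪Tj α p, pd1 (Tj α) p⟫ + ⟪pd1 (Tj α) p, Tj α p⟫ = 0 := by
    rw [← hd.deriv, hev.deriv_eq, deriv_const]
  rw [real_inner_comm] at h0
  linarith [h0]

theorem pd1T_eq (hp : p ∈ UU α) :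
    pd1 (Tj α) p = (-(Lj α p * Kj α 0 p)) • Nj α p := by
  have hexp := expansion (Tj α p) (TT_one hp) (pd1 (Tj α) p)
  have hK : Kj α 0 p = -(Wj α p * ⟪pd1 (Tj α) p, Nj α p⟫) := by
    rw [Kj_zero, Sv, real_inner_smul_left]
  have hc1 : -(Lj α p * Kj α 0 p) = ⟪pd1 (Tj α) p, Nj α p⟫ := by
    rw [hK, mul_neg, neg_neg, ← mul_assoc, LW hp, one_mul]
  have hN : Jmap (Tj α p) = Nj α p := rfl
  rw [hN, pd1T_T_zero hc hp, ← hc1] at hexp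
  simpa using hexp
/-- The good interior set where all evolution identities hold. -/
def VV (Tend : ℝ) (α : ℝ → ℝ → E2) : Set (ℝ × ℝ) :=
  {p | p ∈ UU α ∧ p.1 ∈ Ioo (-1:ℝ) 1 ∧ p.2 ∈ Ico (0:ℝ) Tend}

/-- the flow velocity field -/
def FN (α : ℝ → ℝ → E2) : ℝ × ℝ → E2 := fun q => Kj α 2 q • Nj α q

omit hc in
theorem VV_sub_UU : VV Tend α ⊆ UU α := fun _ hp => hp.1

theorem VV_slice_nhds (hp : p ∈ VV Tend α) :
    ∀ᶠ u in 𝓝 p.1, (u, p.2) ∈ VV Tend α := by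
  have h1 : ∀ᶠ u in 𝓝 p.1, (u, p.2) ∈ UU α := by
    have hcont : Continuous fun u : ℝ => ((u, p.2) : ℝ × ℝ) := by fun_prop
    exact hcont.continuousAt.preimage_mem_nhds ((UU_open hc).mem_nhds (by simpa using hp.1))
  have h2 : ∀ᶠ u in 𝓝 p.1, u ∈ Ioo (-1:ℝ) 1 := isOpen_Ioo.eventually_mem hp.2.1
  filter_upwards [h1, h2] with u hu1 hu2
  exact ⟨hu1, hu2, hp.2.2⟩

theorem pd1_congr_VV {F : Type*} [NormedAddCommGroup F] [NormedSpace ℝ F]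
    {f g : ℝ × ℝ → F} (hfg : ∀ q ∈ VV Tend α, f q = g q) (hp : p ∈ VV Tend α) :
    pd1 f p = pd1 g p := by
  apply pd1_congr
  filter_upwards [VV_slice_nhds hc hp] with u hu using hfg _ hu

theorem pd1N_eq (hp : p ∈ UU α) :
    pd1 (Nj α) p = (Lj α p * Kj α 0 p) • Tj α p := by
  have h1 : HasDerivAt (fun u => Nj α (u, p.2)) (Jmap (pd1 (Tj α) p)) p.1 := by
    have := Jmap.hasFDerivAt.comp_hasDerivAt p.1 (sliceD1 (Tj_smooth hc hp))
    exact this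
  have h2 : pd1 (Nj α) p = Jmap (pd1 (Tj α) p) := h1.deriv
  rw [h2, pd1T_eq hc hp, ContinuousLinearMap.map_smul]
  have hJN : Jmap (Nj α p) = -(Tj α p) := JJ _
  rw [hJN]
  rw [smul_neg, neg_smul, neg_neg]

theorem Sv_eq (hp : p ∈ UU α) : Sv α p = (-(Kj α 0 p)) • Nj α p := by
  rw [Sv, pd1T_eq hc hp, smul_smul, mul_neg, ← mul_assoc, WL hp, one_mul]

theorem pd2A_eq (hu : p.1 ∈ Icc (-1:ℝ) 1) (ht : p.2 ∈ Ico (0:ℝ) Tend) :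
    pd2 (fun q : ℝ × ℝ => α q.1 q.2) p = FN α p :=
  (hc.flow p hu ht).deriv

theorem pd1FN (hp : p ∈ UU α) :
    pd1 (FN α) p = Kj α 2 p • pd1 (Nj α) p + pd1 (Kj α 2) p • Nj α p :=
  ((sliceD1 (Kj_smooth hc 2 hp)).smul (sliceD1 (Nj_smooth hc hp))).deriv

theorem pd2Du (hp : p ∈ VV Tend α) : pd2 (Du α) p = pd1 (FN α) p := by
  have hDu : Du α = pd1 (fun q : ℝ × ℝ => α q.1 q.2) := rfl
  rw [hDu, clairaut isOpen_univ (fun q _ => hc.smooth.contDiffAt) (mem_univ p)]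
  apply pd1_congr
  have hev : ∀ᶠ u in 𝓝 p.1, u ∈ Ioo (-1:ℝ) 1 := isOpen_Ioo.eventually_mem hp.2.1
  filter_upwards [hev] with u hu
  exact pd2A_eq hc (Ioo_subset_Icc_self hu) hp.2.2

theorem inner_pd2Du (hp : p ∈ VV Tend α) :
    ⟪pd2 (Du α) p, Du α p⟫ = Kj α 2 p * Kj α 0 p * Lj α p ^ 2 := by
  have hpU : p ∈ UU α := hp.1
  rw [pd2Du hc hp, pd1FN hc hpU, pd1N_eq hc hpU, Du_eq_LT hpU]
  rw [inner_add_left, real_inner_smul_left, real_inner_smul_left, real_inner_smul_right,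
    real_inner_smul_right, real_inner_smul_left, TT_one hpU, NT_zero hpU]
  ring

theorem pd2L (hp : p ∈ VV Tend α) :
    pd2 (Lj α) p = Kj α 2 p * Kj α 0 p * Lj α p := by
  have hpU : p ∈ UU α := hp.1
  have hv : HasDerivAt (fun t => Du α (p.1, t)) (pd2 (Du α) p) p.2 :=
    sliceD2 (Du_smooth hc p)
  have hi : HasDerivAt (fun t => (⟪Du α (p.1, t), Du α (p.1, t)⟫ : ℝ))
      (⟪Du α p, pd2 (Du α) p⟫ + ⟪pd2 (Du α) p, Du α p⟫) p.2 := hv.inner ℝ hv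
  have hne : (⟪Du α p, Du α p⟫ : ℝ) ≠ 0 := inner_self_ne_zero.2 hpU
  have hs := (Real.hasDerivAt_sqrt hne).comp p.2 hi
  have hLfun : (fun t => Lj α (p.1, t)) =
      fun t => Real.sqrt (⟪Du α (p.1, t), Du α (p.1, t)⟫ : ℝ) := by
    funext t
    rw [real_inner_self_eq_norm_sq, Real.sqrt_sq (norm_nonneg _)]
    rfl
  have hd : HasDerivAt (fun t => Lj α (p.1, t))
      ((⟪Du α p, pd2 (Du α) p⟫ + ⟪pd2 (Du α) p, Du α p⟫) /
        (2 * Real.sqrt (⟪Du α p, Du α p⟫ : ℝ))) p.2 := by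
    rw [hLfun]
    exact hs.congr_deriv (by ring)
  have hsqrt : Real.sqrt (⟪Du α p, Du α p⟫ : ℝ) = Lj α p := by
    rw [real_inner_self_eq_norm_sq, Real.sqrt_sq (norm_nonneg _)]
    rfl
  have h2 : pd2 (Lj α) p = (⟪Du α p, pd2 (Du α) p⟫ + ⟪pd2 (Du α) p, Du α p⟫) /
      (2 * Real.sqrt (⟪Du α p, Du α p⟫ : ℝ)) := hd.deriv
  have hip : (⟪Du α p, pd2 (Du α) p⟫ : ℝ) = Kj α 2 p * Kj α 0 p * Lj α p ^ 2 := by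
    rw [real_inner_comm]
    exact inner_pd2Du hc hp
  rw [h2, hsqrt, hip, inner_pd2Du hc hp]
  have hL : Lj α p ≠ 0 := Lj_ne hpU
  field_simp
  ring

theorem pd2W (hp : p ∈ VV Tend α) :
    pd2 (Wj α) p = -(Kj α 2 p * Kj α 0 p * Wj α p) := by
  have hpU : p ∈ UU α := hp.1
  have hLd : HasDerivAt (fun t => Lj α (p.1, t)) (pd2 (Lj α) p) p.2 :=
    sliceD2 (Lj_smooth hc hpU)
  have hinv := hLd.inv (Lj_ne hpU)
  have hW : pd2 (Wj α) p = -(pd2 (Lj α) p) / (Lj α p) ^ 2 := hinv.deriv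
  rw [hW, pd2L hc hp]
  have hL : Lj α p ≠ 0 := Lj_ne hpU
  rw [Wj]
  have : (Lj α p)⁻¹ = ‖Du α p‖⁻¹ := rfl
  rw [← this]
  field_simp

theorem pd2T (hp : p ∈ VV Tend α) : pd2 (Tj α) p = Kj α 3 p • Nj α p := by
  have hpU : p ∈ UU α := hp.1
  have hW : HasDerivAt (fun t => Wj α (p.1, t)) (pd2 (Wj α) p) p.2 :=
    sliceD2 (Wj_smooth hc hpU)
  have hD : HasDerivAt (fun t => Du α (p.1, t)) (pd2 (Du α) p) p.2 :=
    sliceD2 (Du_smooth hc p)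
  have h1 : pd2 (Tj α) p = Wj α p • pd2 (Du α) p + pd2 (Wj α) p • Du α p :=
    (hW.smul hD).deriv
  rw [h1, pd2Du hc hp, pd1FN hc hpU, pd1N_eq hc hpU, Du_eq_LT hpU, pd2W hc hp,
    Kj_succ 2]
  match_scalars <;> ring

theorem pd2N (hp : p ∈ VV Tend α) : pd2 (Nj α) p = (-(Kj α 3 p)) • Tj α p := by
  have hpU : p ∈ UU α := hp.1
  have h1 : HasDerivAt (fun t => Nj α (p.1, t)) (Jmap (pd2 (Tj α) p)) p.2 := by
    have := Jmap.hasFDerivAt.comp_hasDerivAt p.2 (sliceD2 (Tj_smooth hc hpU))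
    exact this
  have h2 : pd2 (Nj α) p = Jmap (pd2 (Tj α) p) := h1.deriv
  rw [h2, pd2T hc hp, ContinuousLinearMap.map_smul]
  have hJN : Jmap (Nj α p) = -(Tj α p) := JJ _
  rw [hJN, smul_neg, ← neg_smul]

theorem pd2Sv (hp : p ∈ VV Tend α) :
    pd2 (Sv α) p = (Kj α 2 p * Kj α 0 p ^ 2 + Kj α 4 p) • Nj α p
      + (Kj α 0 p * Kj α 3 p) • Tj α p := by
  have hpU : p ∈ UU α := hp.1
  have hW : HasDerivAt (fun t => Wj α (p.1, t)) (pd2 (Wj α) p) p.2 :=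
    sliceD2 (Wj_smooth hc hpU)
  have hT1 : HasDerivAt (fun t => pd1 (Tj α) (p.1, t)) (pd2 (pd1 (Tj α)) p) p.2 :=
    sliceD2 (contDiffAt_pd1 (UU_open hc) (fun _ hq => Tj_smooth hc hq) hpU)
  have h1 : pd2 (Sv α) p = Wj α p • pd2 (pd1 (Tj α)) p + pd2 (Wj α) p • pd1 (Tj α) p :=
    (hW.smul hT1).deriv
  have hcl : pd2 (pd1 (Tj α)) p = pd1 (pd2 (Tj α)) p :=
    clairaut (UU_open hc) (fun _ hq => Tj_smooth hc hq) hpU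
  have hcg : pd1 (pd2 (Tj α)) p = pd1 (fun q => Kj α 3 q • Nj α q) p :=
    pd1_congr_VV hc (fun _ hq => pd2T hc hq) hp
  have hsm : pd1 (fun q => Kj α 3 q • Nj α q) p
      = Kj α 3 p • pd1 (Nj α) p + pd1 (Kj α 3) p • Nj α p :=
    ((sliceD1 (Kj_smooth hc 3 hpU)).smul (sliceD1 (Nj_smooth hc hpU))).deriv
  rw [h1, hcl, hcg, hsm, pd1N_eq hc hpU, pd1T_eq hc hpU, pd2W hc hp, Kj_succ 3]
  match_scalars
  · linear_combination (Kj α 3 p * Kj α 0 p) * (WL hpU)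
  · linear_combination (Kj α 2 p * Kj α 0 p ^ 2) * (WL hpU)

theorem pd2K0 (hp : p ∈ VV Tend α) :
    pd2 (Kj α 0) p = -(Kj α 4 p + Kj α 0 p ^ 2 * Kj α 2 p) := by
  have hpU : p ∈ UU α := hp.1
  have hK0fun : Kj α 0 = fun q => -(⟪Sv α q, Nj α q⟫ : ℝ) := funext fun q => Kj_zero q
  have hSd : HasDerivAt (fun t => Sv α (p.1, t)) (pd2 (Sv α) p) p.2 :=
    sliceD2 (Sv_smooth hc hpU)
  have hNd : HasDerivAt (fun t => Nj α (p.1, t)) (pd2 (Nj α) p) p.2 :=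
    sliceD2 (Nj_smooth hc hpU)
  have hd := (hSd.inner ℝ hNd).neg
  have h1 : pd2 (Kj α 0) p
      = -((⟪Sv α p, pd2 (Nj α) p⟫ : ℝ) + ⟪pd2 (Sv α) p, Nj α p⟫) := by
    rw [hK0fun]
    exact hd.deriv
  rw [h1, Sv_eq hc hpU, pd2N hc hp, pd2Sv hc hp]
  rw [real_inner_smul_left, real_inner_smul_right, NT_zero hpU, inner_add_left,
    real_inner_smul_left, real_inner_smul_left, NN_one hpU, TN_zero hpU]
  ring


/-- the class of "P-style" cubic expressions in curvature derivatives: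
sums of terms `r * k_{s^a} k_{s^b} k_{s^c}` with `a+b+c = m`. -/
inductive InP (α : ℝ → ℝ → E2) : ℕ → ((ℝ × ℝ) → ℝ) → Prop
  | mono (a b c : ℕ) (r : ℝ) {m : ℕ} (h : a + b + c = m) :
      InP α m (fun p => r * Kj α a p * Kj α b p * Kj α c p)
  | add {m : ℕ} {f g : (ℝ × ℝ) → ℝ} : InP α m f → InP α m g →
      InP α m (fun p => f p + g p)

omit hc in
theorem InP_vanish {m : ℕ} {f : (ℝ × ℝ) → ℝ} (hf : InP α m f) (hm : Odd m)
    (hvan : ∀ j : ℕ, Odd j → j ≤ m → Kj α j p = 0) : f p = 0 := by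
  induction hf with
  | mono a b c r h =>
    have hodd : Odd a ∨ Odd b ∨ Odd c := by
      rcases Nat.even_or_odd a with ha | ha
      · rcases Nat.even_or_odd b with hb | hb
        · right; right
          rcases hm with ⟨k, hk⟩
          rcases ha with ⟨x, hx⟩
          rcases hb with ⟨y, hy⟩
          refine ⟨k - x - y, by omega⟩
        · right; left; exact hb
      · left; exact ha
    rcases hodd with ha | hb | hcc
    · simp only [hvan a ha (by omega), mul_zero, zero_mul]
    · simp only [hvan b hb (by omega), mul_zero, zero_mul]
    · simp only [hvan c hcc (by omega), mul_zero, zero_mul]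
  | add hf hg ihf ihg => simp only [ihf hm hvan, ihg hm hvan, add_zero]

theorem InP_smooth {m : ℕ} {f : (ℝ × ℝ) → ℝ} (hf : InP α m f) (hp : p ∈ UU α) :
    ContDiffAt ℝ ∞ f p := by
  induction hf with
  | mono a b c r h =>
    exact ((contDiffAt_const.mul (Kj_smooth hc a hp)).mul (Kj_smooth hc b hp)).mul
      (Kj_smooth hc c hp)
  | add hf hg ihf ihg => exact ihf.add ihg

theorem InP_deriv {m : ℕ} {f : (ℝ × ℝ) → ℝ} (hf : InP α m f) :
    ∃ g, InP α (m + 1) g ∧ ∀ q ∈ UU α, Wj α q * pd1 f q = g q := by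
  induction hf with
  | mono a b c r h =>
    refine ⟨fun q => (r * Kj α (a+1) q * Kj α b q * Kj α c q +
        r * Kj α a q * Kj α (b+1) q * Kj α c q) +
        r * Kj α a q * Kj α b q * Kj α (c+1) q,
      InP.add (InP.add (InP.mono (a+1) b c r (by omega)) (InP.mono a (b+1) c r (by omega)))
        (InP.mono a b (c+1) r (by omega)), fun q hq => ?_⟩
    have hd : HasDerivAt (fun u => r * Kj α a (u, q.2) * Kj α b (u, q.2) * Kj α c (u, q.2))
        (((r * pd1 (Kj α a) q) * Kj α b q + (r * Kj α a q) * pd1 (Kj α b) q) * Kj α c q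
          + (r * Kj α a q * Kj α b q) * pd1 (Kj α c) q) q.1 := by
      have h1 := ((hasDerivAt_const q.1 r).mul (sliceD1 (Kj_smooth hc a hq))).mul
        (sliceD1 (Kj_smooth hc b hq))
      have h2 := h1.mul (sliceD1 (Kj_smooth hc c hq))
      exact h2.congr_deriv (by simp only [Pi.mul_apply]; ring)
    have he : pd1 (fun p => r * Kj α a p * Kj α b p * Kj α c p) q = _ := hd.deriv
    show Wj α q * pd1 (fun p => r * Kj α a p * Kj α b p * Kj α c p) q
      = r * Kj α (a+1) q * Kj α b q * Kj α c q + r * Kj α a q * Kj α (b+1) q * Kj α c q +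
        r * Kj α a q * Kj α b q * Kj α (c+1) q
    rw [he, Kj_succ a, Kj_succ b, Kj_succ c]
    ring
  | @add m' f1 f2 hf1 hf2 ihf ihg =>
    obtain ⟨g1, hg1, he1⟩ := ihf
    obtain ⟨g2, hg2, he2⟩ := ihg
    refine ⟨fun q => g1 q + g2 q, InP.add hg1 hg2, fun q hq => ?_⟩
    have hd : HasDerivAt (fun u => f1 (u, q.2) + f2 (u, q.2))
        (pd1 f1 q + pd1 f2 q) q.1 :=
      (sliceD1 (InP_smooth hc hf1 hq)).add (sliceD1 (InP_smooth hc hf2 hq))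
    have he : pd1 (fun p => f1 p + f2 p) q = pd1 f1 q + pd1 f2 q := hd.deriv
    show Wj α q * pd1 (fun p => f1 p + f2 p) q = g1 q + g2 q
    rw [he, ← he1 q hq, ← he2 q hq]
    ring

/-- The evolution equation for `k_{s^m}` in the interior. -/
theorem Ev (m : ℕ) : ∃ Q, InP α (m + 2) Q ∧
    ∀ q ∈ VV Tend α, pd2 (Kj α m) q = -(Kj α (m + 4) q) + Q q := by
  induction m with
  | zero =>
    refine ⟨fun q => (-1) * Kj α 0 q * Kj α 0 q * Kj α 2 q,
      InP.mono 0 0 2 (-1) rfl, fun q hq => ?_⟩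
    rw [pd2K0 hc hq]
    ring
  | succ m ih =>
    obtain ⟨Q, hQ, hev⟩ := ih
    obtain ⟨gQ, hgQ, hgeq⟩ := InP_deriv hc hQ
    refine ⟨fun q => (-1) * Kj α 0 q * Kj α 2 q * Kj α (m+1) q + gQ q,
      InP.add (InP.mono 0 2 (m+1) (-1) (by omega)) hgQ, fun q hq => ?_⟩
    have hqU : q ∈ UU α := hq.1
    have hKfun : Kj α (m+1) = fun q => Wj α q * pd1 (Kj α m) q := funext fun q => Kj_succ m q
    have hW : HasDerivAt (fun t => Wj α (q.1, t)) (pd2 (Wj α) q) q.2 :=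
      sliceD2 (Wj_smooth hc hqU)
    have hP : HasDerivAt (fun t => pd1 (Kj α m) (q.1, t)) (pd2 (pd1 (Kj α m)) q) q.2 :=
      sliceD2 (contDiffAt_pd1 (UU_open hc) (fun _ hr => Kj_smooth hc m hr) hqU)
    have h1 : pd2 (Kj α (m+1)) q
        = pd2 (Wj α) q * pd1 (Kj α m) q + Wj α q * pd2 (pd1 (Kj α m)) q := by
      rw [hKfun]
      exact (hW.mul hP).deriv
    have hcl : pd2 (pd1 (Kj α m)) q = pd1 (pd2 (Kj α m)) q :=
      clairaut (UU_open hc) (fun _ hr => Kj_smooth hc m hr) hqU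
    have hcg : pd1 (pd2 (Kj α m)) q = pd1 (fun r => -(Kj α (m+4) r) + Q r) q :=
      pd1_congr_VV hc (fun _ hr => hev _ hr) hq
    have hsplit : pd1 (fun r => -(Kj α (m+4) r) + Q r) q
        = -(pd1 (Kj α (m+4)) q) + pd1 Q q := by
      have hd : HasDerivAt (fun u => -(Kj α (m+4) (u, q.2)) + Q (u, q.2))
          (-(pd1 (Kj α (m+4)) q) + pd1 Q q) q.1 :=
        ((sliceD1 (Kj_smooth hc (m+4) hqU)).neg).add (sliceD1 (InP_smooth hc hQ hqU))
      exact hd.deriv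
    have hK1 : Kj α (m+1) q = Wj α q * pd1 (Kj α m) q := Kj_succ m q
    have hK5 : Kj α (m+5) q = Wj α q * pd1 (Kj α (m+4)) q := Kj_succ (m+4) q
    rw [h1, hcl, hcg, hsplit, pd2W hc hq]
    beta_reduce
    rw [show m + 1 + 4 = m + 5 from rfl, hK5, ← hgeq q hqU, hK1]
    ring

omit hc in
theorem ext_bdry {F : Type*} [NormedAddCommGroup F] [NormedSpace ℝ F]
    {f : ℝ × ℝ → F} {p : ℝ × ℝ} (hu : p.1 ∈ Icc (-1:ℝ) 1)
    (hf : ContinuousAt f p) (h0 : ∀ u ∈ Ioo (-1:ℝ) 1, f (u, p.2) = 0) : f p = 0 := by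
  have hcm : Continuous fun u : ℝ => ((u, p.2) : ℝ × ℝ) := by fun_prop
  have hslice : ContinuousAt (fun u => f (u, p.2)) p.1 := hf.comp hcm.continuousAt
  have hne : (𝓝[Ioo (-1:ℝ) 1] p.1).NeBot := by
    rw [← mem_closure_iff_nhdsWithin_neBot, closure_Ioo (by norm_num : (-1:ℝ) ≠ 1)]
    exact hu
  have h1 : Filter.Tendsto (fun u => f (u, p.2)) (𝓝[Ioo (-1:ℝ) 1] p.1) (𝓝 (f p)) :=
    hslice.tendsto.mono_left nhdsWithin_le_nhds
  have h2 : Filter.Tendsto (fun u => f (u, p.2)) (𝓝[Ioo (-1:ℝ) 1] p.1) (𝓝 0) := by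
    apply Filter.Tendsto.congr' _ tendsto_const_nhds
    filter_upwards [self_mem_nhdsWithin] with u hu2
    exact (h0 u hu2).symm
  exact tendsto_nhds_unique h1 h2

theorem Ev_bdry (m : ℕ) : ∃ Q, InP α (m + 2) Q ∧ ∀ p : ℝ × ℝ,
    p.1 ∈ Icc (-1:ℝ) 1 → p.2 ∈ Ico (0:ℝ) Tend →
    pd2 (Kj α m) p = -(Kj α (m + 4) p) + Q p := by
  obtain ⟨Q, hQ, hev⟩ := Ev hc m
  refine ⟨Q, hQ, fun p hu ht => ?_⟩
  have hpU : p ∈ UU α := hc.reg p hu ht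
  have hz : (fun q => pd2 (Kj α m) q - (-(Kj α (m + 4) q) + Q q)) p = 0 := by
    apply ext_bdry hu
    · exact ((contDiffAt_pd2 (UU_open hc) (fun _ hr => Kj_smooth hc m hr) hpU).continuousAt).sub
        (((Kj_smooth hc (m+4) hpU).continuousAt.neg).add (InP_smooth hc hQ hpU).continuousAt)
    · intro u hu2
      have hVV : ((u, p.2) : ℝ × ℝ) ∈ VV Tend α :=
        ⟨hc.reg _ (Ioo_subset_Icc_self hu2) ht, hu2, ht⟩
      have := hev _ hVV
      simp only [this]
      ring
  have := sub_eq_zero.1 hz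
  exact this

theorem pd2N_bdry : ∀ p : ℝ × ℝ, p.1 ∈ Icc (-1:ℝ) 1 → p.2 ∈ Ico (0:ℝ) Tend →
    pd2 (Nj α) p = (-(Kj α 3 p)) • Tj α p := by
  intro p hu ht
  have hpU : p ∈ UU α := hc.reg p hu ht
  have hz : (fun q => pd2 (Nj α) q - (-(Kj α 3 q)) • Tj α q) p = 0 := by
    apply ext_bdry hu
    · exact ((contDiffAt_pd2 (UU_open hc) (fun _ hr => Nj_smooth hc hr) hpU).continuousAt).sub
        (((Kj_smooth hc 3 hpU).continuousAt.neg).smul (Tj_smooth hc hpU).continuousAt)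
    · intro u hu2
      have hVV : ((u, p.2) : ℝ × ℝ) ∈ VV Tend α :=
        ⟨hc.reg _ (Ioo_subset_Icc_self hu2) ht, hu2, ht⟩
      have := pd2N hc hVV
      simp only [this]
      simp
  have := sub_eq_zero.1 hz
  exact this

omit hc in
theorem deriv_zero_Ico {g : ℝ → ℝ} {d t : ℝ} (ht : t ∈ Ico (0:ℝ) Tend)
    (hg : HasDerivAt g d t) (h0 : ∀ s ∈ Ico (0:ℝ) Tend, g s = 0) : d = 0 := by
  have hT : (0:ℝ) < Tend := lt_of_le_of_lt ht.1 ht.2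
  have hU : UniqueDiffWithinAt ℝ (Ioo (0:ℝ) Tend) t := by
    apply uniqueDiffWithinAt_convex (convex_Ioo 0 Tend)
    · rw [interior_Ioo]; exact nonempty_Ioo.2 hT
    · rw [closure_Ioo (ne_of_lt hT)]; exact ⟨ht.1, le_of_lt ht.2⟩
  have h1 : HasDerivWithinAt g d (Ioo 0 Tend) t := hg.hasDerivWithinAt
  have h2 : HasDerivWithinAt g 0 (Ioo 0 Tend) t := by
    have hz : HasDerivWithinAt (fun _ : ℝ => (0:ℝ)) 0 (Ioo 0 Tend) t :=
      hasDerivWithinAt_const _ _ _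
    exact hz.congr (fun y hy => h0 y ⟨le_of_lt hy.1, hy.2⟩) (h0 t ht)
  rw [← h1.derivWithin hU, h2.derivWithin hU]

/-- the Neumann condition forces `k_{sss} = 0` at a boundary point. -/
theorem K3_bdry {u₀ : ℝ} (hu : u₀ ∈ Icc (-1:ℝ) 1) {e : EuclideanSpace ℝ (Fin 2)}
    (hee : (⟪e, e⟫ : ℝ) = 1)
    (he : ∀ t ∈ Ico (0:ℝ) Tend, (⟪Nj α (u₀, t), e⟫ : ℝ) = 0) :
    ∀ t ∈ Ico (0:ℝ) Tend, Kj α 3 (u₀, t) = 0 := by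
  intro t ht
  have hpU : ((u₀, t) : ℝ × ℝ) ∈ UU α := hc.reg _ hu ht
  have hd : HasDerivAt (fun τ => (⟪Nj α (u₀, τ), e⟫ : ℝ))
      ((⟪Nj α (u₀, t), (0:EuclideanSpace ℝ (Fin 2))⟫ : ℝ) + ⟪pd2 (Nj α) (u₀, t), e⟫) t :=
    (sliceD2 (Nj_smooth hc hpU)).inner ℝ (hasDerivAt_const t e)
  have hz := deriv_zero_Ico ht hd he
  rw [inner_zero_right, zero_add] at hz
  rw [pd2N_bdry hc _ hu ht, real_inner_smul_left] at hz
  have hTe : (⟪Tj α (u₀, t), e⟫ : ℝ) ≠ 0 := by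
    have hexp := expansion (Tj α (u₀, t)) (TT_one hpU) e
    have heN : (⟪e, Jmap (Tj α (u₀, t))⟫ : ℝ) = 0 := by
      rw [real_inner_comm]
      exact he t ht
    rw [heN, zero_smul, add_zero] at hexp
    have h2 : (⟪e, e⟫ : ℝ)
        = ⟪e, Tj α (u₀, t)⟫ * (⟪e, Tj α (u₀, t)⟫ * ⟪Tj α (u₀, t), Tj α (u₀, t)⟫) := by
      conv_lhs => rw [hexp]
      rw [real_inner_smul_left, real_inner_smul_right]
    rw [hee, TT_one hpU, mul_one] at h2
    intro hzero
    rw [real_inner_comm] at hzero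
    rw [hzero, mul_zero] at h2
    exact one_ne_zero h2
  rcases mul_eq_zero.1 hz with h | h
  · exact neg_eq_zero.1 h
  · exact absurd h hTe

/-- Master induction: all odd arclength derivatives of curvature vanish at the boundary. -/
theorem master (hnf : ∀ t ∈ Ico (0:ℝ) Tend, Kj α 1 (-1, t) = 0 ∧ Kj α 1 (1, t) = 0)
    (hK3 : ∀ t ∈ Ico (0:ℝ) Tend, Kj α 3 (-1, t) = 0 ∧ Kj α 3 (1, t) = 0) :
    ∀ ℓ : ℕ, 1 ≤ ℓ → ∀ t ∈ Ico (0:ℝ) Tend,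
      Kj α (2 * ℓ - 1) (-1, t) = 0 ∧ Kj α (2 * ℓ - 1) (1, t) = 0 := by
  intro ℓ
  induction ℓ using Nat.strong_induction_on with
  | _ ℓ ih =>
    intro hℓ t ht
    match ℓ, hℓ with
    | 1, _ => exact hnf t ht
    | 2, _ => exact hK3 t ht
    | (n+3), _ =>
      set ℓ := n + 3 with hℓdef
      obtain ⟨Q, hQ, hEvB⟩ := Ev_bdry hc (2 * ℓ - 5)
      have harith4 : 2 * ℓ - 5 + 4 = 2 * ℓ - 1 := by omega
      have harith2 : 2 * ℓ - 5 + 2 = 2 * ℓ - 3 := by omega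
      have hml : 2 * (ℓ - 2) - 1 = 2 * ℓ - 5 := by omega
      have hQvan : ∀ u₀ : ℝ, u₀ ∈ Icc (-1:ℝ) 1 → (u₀ = -1 ∨ u₀ = 1) →
          Q (u₀, t) = 0 := by
        intro u₀ hu₀ hcase
        rw [harith2] at hQ
        apply InP_vanish hQ ⟨ℓ - 2, by omega⟩
        intro j hj hjle
        obtain ⟨k, hk⟩ := hj
        have h1k : 1 ≤ k + 1 := by omega
        have := ih (k + 1) (by omega) h1k t ht
        have hjk : j = 2 * (k + 1) - 1 := by omega
        rw [hjk]
        rcases hcase with h | h <;> rw [h]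
        · exact this.1
        · exact this.2
      have hmain : ∀ u₀ : ℝ, u₀ ∈ Icc (-1:ℝ) 1 → (u₀ = -1 ∨ u₀ = 1) →
          Kj α (2 * ℓ - 1) (u₀, t) = 0 := by
        intro u₀ hu₀ hcase
        have hpU : ((u₀, t) : ℝ × ℝ) ∈ UU α := hc.reg _ hu₀ ht
        have hz : ∀ s ∈ Ico (0:ℝ) Tend, Kj α (2 * ℓ - 5) (u₀, s) = 0 := by
          intro s hs
          have := ih (ℓ - 2) (by omega) (by omega) s hs
          rw [hml] at this
          rcases hcase with h | h <;> rw [h]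
          · exact this.1
          · exact this.2
        have hd : HasDerivAt (fun τ => Kj α (2 * ℓ - 5) (u₀, τ))
            (pd2 (Kj α (2 * ℓ - 5)) (u₀, t)) t :=
          sliceD2 (Kj_smooth hc _ hpU)
        have hd0 : pd2 (Kj α (2 * ℓ - 5)) (u₀, t) = 0 := deriv_zero_Ico ht hd hz
        have hEv := hEvB (u₀, t) hu₀ ht
        rw [hd0, harith4, hQvan u₀ hu₀ hcase] at hEv
        linarith [hEv]
      constructor
      · exact hmain (-1) (by norm_num) (Or.inl rfl)
      · exact hmain 1 (by norm_num) (Or.inr rfl)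
end CDFAux

theorem coneDir_unit (θ : ℝ) : (⟪coneDir θ, coneDir θ⟫ : ℝ) = 1 := by
  rw [inner_E2]
  have h0 : coneDir θ 0 = Real.cos θ := rfl
  have h1 : coneDir θ 1 = Real.sin θ := rfl
  rw [h0, h1]
  nlinarith [Real.sin_sq_add_cos_sq θ]
/-- **Odd curvature derivatives vanish on the boundary.** Under the curve diffusion flow
with generalised Neumann boundary conditions inside the cone, for every `ℓ ≥ 1` and every
`t ∈ [0,T)` one has `k_{s^{2ℓ-1}}(±1, t) = 0`. -/
theorem odd_curvature_derivatives_vanish (θ₁ θ₂ T : ℝ)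
    (α : ℝ → ℝ → EuclideanSpace ℝ (Fin 2))
    (hflow : IsCDFlow θ₁ θ₂ (Ico 0 T) α) :
    ∀ ℓ : ℕ, 1 ≤ ℓ → ∀ t ∈ Ico (0:ℝ) T,
      curvDeriv (fun u => α u t) (2 * ℓ - 1) (-1) = 0 ∧
      curvDeriv (fun u => α u t) (2 * ℓ - 1) 1 = 0 := by
  have hc : CDFAux.Ctx T α :=
    { smooth := hflow.smooth.of_le (by simp)
      reg := fun p hu ht => hflow.regular p.2 ht p.1 hu
      flow := fun p hu ht => hflow.flow p.2 ht p.1 hu }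
  have hnf : ∀ t ∈ Ico (0:ℝ) T, CDFAux.Kj α 1 (-1, t) = 0 ∧ CDFAux.Kj α 1 (1, t) = 0 :=
    fun t ht => hflow.noflux t ht
  have hK3L : ∀ t ∈ Ico (0:ℝ) T, CDFAux.Kj α 3 (-1, t) = 0 :=
    CDFAux.K3_bdry hc (by norm_num) (coneDir_unit (θ₁ + Real.pi / 2))
      (fun t ht => hflow.neumann_left t ht)
  have hK3R : ∀ t ∈ Ico (0:ℝ) T, CDFAux.Kj α 3 (1, t) = 0 :=
    CDFAux.K3_bdry hc (by norm_num) (coneDir_unit (θ₂ + Real.pi / 2))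
      (fun t ht => hflow.neumann_right t ht)
  have h := CDFAux.master hc hnf (fun t ht => ⟨hK3L t ht, hK3R t ht⟩)
  intro ℓ hℓ t ht
  exact h ℓ hℓ t ht

end
end
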